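/- If r_y = b - Ay ≠ 0, then for every ξ ∈ ℝ^s the matrix J(ξ) = [[I_n⊗(r_yᵀΣ_{pq}) - AᵀΣ_{pq}(yᵀ⊗I_m), θ₁⁻¹AᵀΣ_{pq}, -θ₂⁻¹(I_n⊗ξᵀ), 0], [0, 0, θ₂⁻¹(yᵀ⊗I_s), -θ₃⁻¹I_s]] has full row rank n+s. -/

import Mathlib

/-!
Full row rank means that the only left null vector `u = (u₁, u₂)` of `J` is zero. The block
`-θ₃⁻¹ I_s` forces `u₂ = 0`. The block `θ₁⁻¹ AᵀΣ` then gives `u₁ᵀAᵀΣ = 0`, which cancels the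
contribution of `AᵀΣ(yᵀ ⊗ I_m)` to the first block, leaving `u₁ᵀ(I_n ⊗ wᵀ) = u₁ ⊗ wᵀ = 0` with
`w = Σ r_y`. As `Σ² = I`, `w ≠ 0`, hence `u₁ = 0`.
-/

open Matrix Kronecker

/-- A vector `v ∈ ℝ^κ` viewed as the row matrix `vᵀ ∈ ℝ^{1×κ}`. -/
def rowM {κ : Type*} (v : κ → ℝ) : Matrix Unit κ ℝ := fun _ j => v j

namespace Matrix

section Ring

variable {R : Type*} [Ring R] {m p q : Type*}

theorem vecMul_ne_zero_of_mul_self_eq_one [Fintype m] [DecidableEq m] {S : Matrix m m R}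
    (hS : S * S = 1) {r : m → R} (hr : r ≠ 0) : r ᵥ* S ≠ 0 := by
  intro h
  apply hr
  rw [← vecMul_one r, ← hS, ← vecMul_vecMul, h, zero_vecMul]

theorem fromBlocks_one_zero_zero_neg_one_mul_self [Fintype p] [Fintype q] [DecidableEq p]
    [DecidableEq q] :
    fromBlocks (1 : Matrix p p R) 0 0 (-1 : Matrix q q R) * fromBlocks 1 0 0 (-1) = 1 := by
  simp [fromBlocks_multiply]

end Ring

section Field

variable {K : Type*} [Field K] {m n o p : Type*} [Fintype m]

theorem linearIndependent_row_iff_vecMul_eq_zero {M : Matrix m n K} :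
    LinearIndependent K M.row ↔ ∀ u, u ᵥ* M = 0 → u = 0 := by
  rw [← vecMul_injective_iff, ← coe_vecMulLinear, injective_iff_map_eq_zero]
  rfl

theorem linearIndependent_row_smul_one [DecidableEq m] {c : K} (hc : c ≠ 0) :
    LinearIndependent K (c • (1 : Matrix m m K)).row :=
  linearIndependent_row_iff_vecMul_eq_zero.mpr fun u hu => by
    simpa [vecMul_smul, hc] using hu

theorem linearIndependent_row_fromCols_of_right {B : Matrix m n K} {C : Matrix m o K}
    (hC : LinearIndependent K C.row) : LinearIndependent K (fromCols B C).row := by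
  rw [linearIndependent_row_iff_vecMul_eq_zero] at hC ⊢
  intro u hu
  rw [vecMul_fromCols] at hu
  exact hC u (funext fun j => congr_fun hu (Sum.inr j))

theorem linearIndependent_row_fromBlocks_zero₂₁ [Fintype n] {A : Matrix m o K}
    {B : Matrix m p K} {D : Matrix n p K} (hA : LinearIndependent K A.row)
    (hD : LinearIndependent K D.row) : LinearIndependent K (fromBlocks A B 0 D).row := by
  rw [linearIndependent_row_iff_vecMul_eq_zero] at hA hD ⊢
  intro u hu
  rw [vecMul_fromBlocks, vecMul_zero, add_zero] at hu
  have hu₁ : u ∘ Sum.inl = 0 := hA _ (funext fun j => congr_fun hu (Sum.inl j))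
  have hu₂ : u ∘ Sum.inr = 0 := by
    refine hD _ (funext fun j => ?_)
    simpa [hu₁] using congr_fun hu (Sum.inr j)
  ext (i | i)
  exacts [congr_fun hu₁ i, congr_fun hu₂ i]

theorem linearIndependent_row_fromCols_sub_mul_smul [Fintype n] {M : Matrix m o K}
    {C : Matrix m n K} (L : Matrix n o K) {c : K} (hc : c ≠ 0)
    (hM : LinearIndependent K M.row) :
    LinearIndependent K (fromCols (M - C * L) (c • C)).row := by
  rw [linearIndependent_row_iff_vecMul_eq_zero] at hM ⊢
  intro u hu
  rw [vecMul_fromCols] at hu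
  have hu₁ : u ᵥ* (M - C * L) = 0 := funext fun j => congr_fun hu (Sum.inl j)
  have hu₂ : u ᵥ* (c • C) = 0 := funext fun j => congr_fun hu (Sum.inr j)
  have huC : u ᵥ* C = 0 := by simpa [vecMul_smul, hc] using hu₂
  refine hM u ?_
  simpa [vecMul_sub, ← vecMul_vecMul, huC] using hu₁

end Field

end Matrix

section Kronecker

variable {n κ : Type*} [Fintype n] [DecidableEq n]

theorem vecMul_reindex_one_kronecker_rowM (w : κ → ℝ) (u : n → ℝ) (k : n) (j : κ) :
    (u ᵥ* reindex (Equiv.prodPUnit n) (Equiv.refl (n × κ))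
      ((1 : Matrix n n ℝ) ⊗ₖ rowM w)) (k, j) = u k * w j := by
  simp [vecMul, dotProduct, rowM, one_apply]

theorem linearIndependent_row_reindex_one_kronecker_rowM {w : κ → ℝ} (hw : w ≠ 0) :
    LinearIndependent ℝ (reindex (Equiv.prodPUnit n) (Equiv.refl (n × κ))
      ((1 : Matrix n n ℝ) ⊗ₖ rowM w)).row := by
  obtain ⟨j, hj⟩ := Function.ne_iff.mp hw
  rw [linearIndependent_row_iff_vecMul_eq_zero]
  intro u hu
  funext k
  have hukj := congr_fun hu (k, j)
  rw [vecMul_reindex_one_kronecker_rowM] at hukj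
  exact (mul_eq_zero.mp hukj).resolve_right hj

end Kronecker

theorem J_full_row_rank_general (p q n s : ℕ)
    (A : Matrix (Fin p ⊕ Fin q) (Fin n) ℝ) (b : Fin p ⊕ Fin q → ℝ) (y : Fin n → ℝ)
    (ξ : Fin s → ℝ) (θ₁ θ₂ θ₃ : ℝ) (hθ₁ : 0 < θ₁) (hθ₃ : 0 < θ₃)
    (Sig : Matrix (Fin p ⊕ Fin q) (Fin p ⊕ Fin q) ℝ)
    (hSig : Sig = Matrix.fromBlocks (1 : Matrix (Fin p) (Fin p) ℝ) 0 0
      (-(1 : Matrix (Fin q) (Fin q) ℝ)))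
    (hry : b - A.mulVec y ≠ 0) :
    (Matrix.fromBlocks
      (Matrix.fromCols
        (Matrix.reindex (Equiv.prodPUnit (Fin n))
            (Equiv.refl (Fin n × (Fin p ⊕ Fin q)))
            ((1 : Matrix (Fin n) (Fin n) ℝ) ⊗ₖ rowM (Matrix.vecMul (b - A.mulVec y) Sig)) -
          Aᵀ * Sig *
            Matrix.reindex (Equiv.punitProd (Fin p ⊕ Fin q))
              (Equiv.refl (Fin n × (Fin p ⊕ Fin q)))
              (rowM y ⊗ₖ (1 : Matrix (Fin p ⊕ Fin q) (Fin p ⊕ Fin q) ℝ)))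
        (θ₁⁻¹ • (Aᵀ * Sig)))
      (Matrix.fromCols
        (-(θ₂⁻¹ • Matrix.reindex (Equiv.prodPUnit (Fin n)) (Equiv.refl (Fin n × Fin s))
            ((1 : Matrix (Fin n) (Fin n) ℝ) ⊗ₖ rowM ξ)))
        (0 : Matrix (Fin n) (Fin s) ℝ))
      (Matrix.fromCols (0 : Matrix (Fin s) (Fin n × (Fin p ⊕ Fin q)) ℝ)
        (0 : Matrix (Fin s) (Fin p ⊕ Fin q) ℝ))
      (Matrix.fromCols
        (θ₂⁻¹ • Matrix.reindex (Equiv.punitProd (Fin s)) (Equiv.refl (Fin n × Fin s))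
          (rowM y ⊗ₖ (1 : Matrix (Fin s) (Fin s) ℝ)))
        (-(θ₃⁻¹ • (1 : Matrix (Fin s) (Fin s) ℝ))))).rank = n + s := by
  
  have hw : (b - A *ᵥ y) ᵥ* Sig ≠ 0 :=
    vecMul_ne_zero_of_mul_self_eq_one (hSig ▸ fromBlocks_one_zero_zero_neg_one_mul_self) hry
  have hD : LinearIndependent ℝ (-(θ₃⁻¹ • (1 : Matrix (Fin s) (Fin s) ℝ))).row := by
    rw [← neg_smul]
    exact linearIndependent_row_smul_one (neg_ne_zero.mpr (inv_ne_zero hθ₃.ne'))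
  rw [fromCols_zero, (linearIndependent_row_fromBlocks_zero₂₁
    (linearIndependent_row_fromCols_sub_mul_smul _ (inv_ne_zero hθ₁.ne')
      (linearIndependent_row_reindex_one_kronecker_rowM hw))
    (linearIndependent_row_fromCols_of_right hD)).rank_matrix]
  simp

/-- If `r_y = b - Ay ≠ 0`, then for every `ξ ∈ ℝ^s` the matrix
`J(ξ) = [[I_n⊗(r_yᵀΣ) - AᵀΣ(yᵀ⊗I_m), θ₁⁻¹AᵀΣ, -θ₂⁻¹(I_n⊗ξᵀ), 0],
         [0, 0, θ₂⁻¹(yᵀ⊗I_s), -θ₃⁻¹I_s]] ∈ ℝ^{(n+s)×(nm+m+ns+s)}`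
(with `Σ = diag(I_p, -I_q)`, `m = p+q`, indexed by `Fin p ⊕ Fin q`) has full row
rank `n + s`. -/
theorem J_full_row_rank (p q n s : ℕ)
    (A : Matrix (Fin p ⊕ Fin q) (Fin n) ℝ) (b : Fin p ⊕ Fin q → ℝ) (y : Fin n → ℝ)
    (ξ : Fin s → ℝ) (θ₁ θ₂ θ₃ : ℝ) (hθ₁ : 0 < θ₁) (hθ₂ : 0 < θ₂) (hθ₃ : 0 < θ₃)
    (Sig : Matrix (Fin p ⊕ Fin q) (Fin p ⊕ Fin q) ℝ)
    (hSig : Sig = Matrix.fromBlocks (1 : Matrix (Fin p) (Fin p) ℝ) 0 0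
      (-(1 : Matrix (Fin q) (Fin q) ℝ)))
    (hry : b - A.mulVec y ≠ 0) :
    (Matrix.fromBlocks
      (Matrix.fromCols
        (Matrix.reindex (Equiv.prodPUnit (Fin n))
            (Equiv.refl (Fin n × (Fin p ⊕ Fin q)))
            ((1 : Matrix (Fin n) (Fin n) ℝ) ⊗ₖ rowM (Matrix.vecMul (b - A.mulVec y) Sig)) -
          Aᵀ * Sig *
            Matrix.reindex (Equiv.punitProd (Fin p ⊕ Fin q))
              (Equiv.refl (Fin n × (Fin p ⊕ Fin q)))
              (rowM y ⊗ₖ (1 : Matrix (Fin p ⊕ Fin q) (Fin p ⊕ Fin q) ℝ)))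
        (θ₁⁻¹ • (Aᵀ * Sig)))
      (Matrix.fromCols
        (-(θ₂⁻¹ • Matrix.reindex (Equiv.prodPUnit (Fin n)) (Equiv.refl (Fin n × Fin s))
            ((1 : Matrix (Fin n) (Fin n) ℝ) ⊗ₖ rowM ξ)))
        (0 : Matrix (Fin n) (Fin s) ℝ))
      (Matrix.fromCols (0 : Matrix (Fin s) (Fin n × (Fin p ⊕ Fin q)) ℝ)
        (0 : Matrix (Fin s) (Fin p ⊕ Fin q) ℝ))
      (Matrix.fromCols
        (θ₂⁻¹ • Matrix.reindex (Equiv.punitProd (Fin s)) (Equiv.refl (Fin n × Fin s))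
          (rowM y ⊗ₖ (1 : Matrix (Fin s) (Fin s) ℝ)))
        (-(θ₃⁻¹ • (1 : Matrix (Fin s) (Fin s) ℝ))))).rank = n + s :=
  J_full_row_rank_general p q n s A b y ξ θ₁ θ₂ θ₃ hθ₁ hθ₃ Sig hSig hry
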